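/- A function of the form X_n(t) = a_n/(t - t_0) (for t > t_0) is a componentwise solution of the dyadic model if and only if the sequence (a_n) satisfies a_0 = 0 and a_n a_{n+1} = 2^{-n} a_n + a_{n-1}^2 / 2 for all n ≥ 1. -/

import Mathlib

/-!
With `φ(t) = 1/(t - t₀)` one has `φ' = -φ²`, so substituting `X_n = a_n φ` into the equation
for `X_{n+1}` makes both sides multiples of `φ²`; dividing by `φ²` leaves a relation among
`a_n, a_{n+1}, a_{n+2}` alone, which is the stated recurrence. The same reduction read
backwards shows that the recurrence suffices.
-/

/-- A componentwise solution of the unforced dyadic model on the open interval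
`(t₀, ∞)`. -/
def IsDyadicSolOn (X : ℕ → ℝ → ℝ) (t₀ : ℝ) : Prop :=
  (∀ t : ℝ, t₀ < t → X 0 t = 0) ∧
  ∀ n : ℕ, ∀ t : ℝ, t₀ < t →
    HasDerivAt (X (n + 1))
      ((2 : ℝ) ^ n * (X n t) ^ 2 - 2 ^ (n + 1) * X (n + 1) t * X (n + 2) t) t

theorem hasDerivAt_const_div_sub {𝕜 : Type*} [NontriviallyNormedField 𝕜] (c t₀ t : 𝕜)
    (ht : t ≠ t₀) : HasDerivAt (fun s => c / (s - t₀)) (-c / (t - t₀) ^ 2) t := by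
  simpa only [div_eq_mul_inv, neg_mul, one_mul, mul_neg] using
    (((hasDerivAt_id' t).sub_const t₀).fun_inv (sub_ne_zero.2 ht)).const_mul c

theorem self_similar_ode_iff {d : ℝ} (hd : d ≠ 0) (n : ℕ) (a₀ a₁ a₂ : ℝ) :
    -a₁ / d ^ 2 = 2 ^ n * (a₀ / d) ^ 2 - 2 ^ (n + 1) * (a₁ / d) * (a₂ / d) ↔
      a₁ * a₂ = ((2 : ℝ) ^ (n + 1))⁻¹ * a₁ + a₀ ^ 2 / 2 := by
  field_simp
  constructor <;> intro h
  · linear_combination 2 * h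
  · linear_combination h / 2

theorem hasDerivAt_self_similar_iff (a : ℕ → ℝ) (n : ℕ) {t₀ t : ℝ} (ht : t ≠ t₀) :
    HasDerivAt (fun s => a (n + 1) / (s - t₀))
        (2 ^ n * (a n / (t - t₀)) ^ 2 -
          2 ^ (n + 1) * (a (n + 1) / (t - t₀)) * (a (n + 2) / (t - t₀))) t ↔
      a (n + 1) * a (n + 2) = ((2 : ℝ) ^ (n + 1))⁻¹ * a (n + 1) + a n ^ 2 / 2 := by
  have hderiv := hasDerivAt_const_div_sub (a (n + 1)) t₀ t ht
  rw [← self_similar_ode_iff (sub_ne_zero.2 ht)]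
  exact ⟨hderiv.unique, hderiv.congr_deriv⟩

/-- `X_n(t) = a_n / (t - t₀)` is a componentwise solution on `(t₀, ∞)` iff
`a_0 = 0` and `a_n a_{n+1} = 2^{-n} a_n + a_{n-1}² / 2` for all `n ≥ 1`. -/
theorem dyadic_self_similar_characterization (a : ℕ → ℝ) (t₀ : ℝ) :
    IsDyadicSolOn (fun n t => a n / (t - t₀)) t₀ ↔
      (a 0 = 0 ∧ ∀ n : ℕ, 1 ≤ n →
        a n * a (n + 1) = ((2 : ℝ) ^ n)⁻¹ * a n + (a (n - 1)) ^ 2 / 2) := by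
  have ht : t₀ < t₀ + 1 := lt_add_one t₀
  constructor
  · rintro ⟨hzero, hode⟩
    refine ⟨by simpa using hzero _ ht, fun n hn => ?_⟩
    obtain ⟨m, rfl⟩ := Nat.exists_eq_add_of_le' hn
    exact (hasDerivAt_self_similar_iff a m ht.ne').1 (hode m _ ht)
  · rintro ⟨ha₀, hrec⟩
    refine ⟨fun t _ => by simp [ha₀], fun n t ht => ?_⟩
    have hrec' := hrec (n + 1) (Nat.le_add_left 1 n)
    rw [Nat.add_sub_cancel] at hrec'
    exact (hasDerivAt_self_similar_iff a n ht.ne').2 hrec'
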